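/- In the family of SMC instances I_n from the support lower bound construction (n odd, α > n+2, valuations as specified), the fractional matching μ = ∑_{i=1}^{(n+1)/2} (1/α)·μ^(i) + (1 − (n+1)/(2α))·μ^opt is a well-defined stable fractional matching with W(μ) > (n−1)α, where μ^opt = {(m_1,w_1)} ∪ {(m_{2i},w_{2i+1}),(m_{2i+1},w_{2i}) : i=1,…,(n−1)/2}, μ^(i) for i ≤ (n−1)/2 is obtained from μ^opt by replacing {(m_1,w_1),(m_{2i},w_{2i+1})} with {(m_1,w_{2i+1}),(m_{2i},w_1)}, and μ^((n+1)/2) is obtained from μ^opt by replacing {(m_1,w_1),(m_n,w_{n−1})} with {(m_1,w_{n−1}),(m_n,w_1)}. -/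

import Mathlib

open Finset

/-- A fractional matching: nonnegative weights with row and column sums at most 1. -/
def IsFrac {n : ℕ} (μ : Fin n → Fin n → ℝ) : Prop :=
  (∀ m w, 0 ≤ μ m w) ∧ (∀ m, ∑ w, μ m w ≤ 1) ∧ (∀ w, ∑ m, μ m w ≤ 1)

/-- An integral matching takes values in {0,1}. -/
def IsIntegralM {n : ℕ} (μ : Fin n → Fin n → ℝ) : Prop :=
  ∀ m w, μ m w = 0 ∨ μ m w = 1

/-- A complete (perfect) matching: all row and column sums equal 1. -/
def IsPerfect {n : ℕ} (μ : Fin n → Fin n → ℝ) : Prop :=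
  (∀ m, ∑ w, μ m w = 1) ∧ (∀ w, ∑ m, μ m w = 1)

/-- Utility of man `m` under matching `μ`. -/
def uM {n : ℕ} (U μ : Fin n → Fin n → ℝ) (m : Fin n) : ℝ := ∑ w, U m w * μ m w

/-- Utility of woman `w` under matching `μ`. -/
def vW {n : ℕ} (V μ : Fin n → Fin n → ℝ) (w : Fin n) : ℝ := ∑ m, V m w * μ m w

/-- Stability: no blocking pair. -/
def IsStable {n : ℕ} (U V μ : Fin n → Fin n → ℝ) : Prop :=
  ∀ m w, U m w ≤ uM U μ m ∨ V m w ≤ vW V μ w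

/-- Social welfare. -/
def welfare {n : ℕ} (U V μ : Fin n → Fin n → ℝ) : ℝ :=
  (∑ m, uM U μ m) + (∑ w, vW V μ w)

/-- Valuations of the men in the instance `I_n` (0-indexed: man `m_{i+1}` is index `i`):
`U(m_i,w_i)=1`, `U(m_{2t},w_1)=α`, `U(m_{2t+1},w_{2t})=α`, all else `0`. -/
def U18 (n : ℕ) (α : ℝ) (i j : Fin n) : ℝ :=
  if i = j then 1
  else if i.val % 2 = 1 ∧ j.val = 0 then α
  else if i.val % 2 = 0 ∧ j.val + 1 = i.val then α
  else 0

/-- Valuations of the women in the instance `I_n`: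
`V(m_i,w_i)=1`, `V(m_{2t},w_{2t+1})=α`, `V(m_n,w_1)=α`, all else `0`. -/
def V18 (n : ℕ) (α : ℝ) (i j : Fin n) : ℝ :=
  if i = j then 1
  else if i.val % 2 = 1 ∧ j.val = i.val + 1 then α
  else if i.val = n - 1 ∧ j.val = 0 then α
  else 0

/-- `μ^opt = {(m_1,w_1)} ∪ {(m_{2t},w_{2t+1}), (m_{2t+1},w_{2t})}` (0-indexed). -/
def muOpt19 (n : ℕ) (i j : Fin n) : ℝ :=
  if i.val = 0 ∧ j.val = 0 then 1
  else if i.val % 2 = 1 ∧ j.val = i.val + 1 then 1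
  else if i.val % 2 = 0 ∧ 0 < i.val ∧ j.val + 1 = i.val then 1
  else 0

/-- `μ^(t)` for `1 ≤ t ≤ (n-1)/2`: replace `{(m_1,w_1),(m_{2t},w_{2t+1})}` in `μ^opt`
by `{(m_1,w_{2t+1}),(m_{2t},w_1)}`. -/
def nu19 (n : ℕ) (t : ℕ) (i j : Fin n) : ℝ :=
  if i.val = 0 then (if j.val = 2 * t then 1 else 0)
  else if i.val = 2 * t - 1 then (if j.val = 0 then 1 else 0)
  else muOpt19 n i j

/-- `μ^((n+1)/2)`: replace `{(m_1,w_1),(m_n,w_{n-1})}` in `μ^opt`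
by `{(m_1,w_{n-1}),(m_n,w_1)}`. -/
def nuLast19 (n : ℕ) (i j : Fin n) : ℝ :=
  if i.val = 0 then (if j.val = n - 2 then 1 else 0)
  else if i.val = n - 1 then (if j.val = 0 then 1 else 0)
  else muOpt19 n i j

/-- `μ = ∑_{t=1}^{(n+1)/2} (1/α)·μ^(t) + (1 − (n+1)/(2α))·μ^opt`. -/
noncomputable def mu19 (n : ℕ) (α : ℝ) (i j : Fin n) : ℝ :=
  (∑ t ∈ Finset.Icc 1 ((n - 1) / 2), (1 / α) * nu19 n t i j)
    + (1 / α) * nuLast19 n i j + (1 - ((n : ℝ) + 1) / (2 * α)) * muOpt19 n i j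

/-!
Each of `μ^opt`, `μ^(t)` and `μ^((n+1)/2)` is a permutation matrix (the last ones are `μ^opt`
with two rows exchanged), and the weights add up to `1`, so `μ` is a perfect fractional matching
once its weights are nonnegative. Every row of `U` and every column of `V` has at most two nonzero
entries, so each utility is read off from at most two entries of `μ`. With
`c = 1 - (n+1)/(2α)`: `m_1` gets `c`, the men `m_{2i}` get `1`, the men `m_{2i+1}` get `α`
except `m_n`, who gets `α - 1`; `w_1` gets `1 + c`, the women `w_{2i}` get `0` and the women
`w_{2i+1}` get `α - 1`. Off the diagonal no pair is valued positively by both sides, and on the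
diagonal `w_1` and every `m_i` with `i ≥ 2` already have utility at least `1`, so `μ` is stable.
Summing, `W(μ) = (n-1)α + 2c > (n-1)α`.
-/

section

variable {n k : ℕ} {α : ℝ}

lemma IsPerfect.isFrac {μ : Fin n → Fin n → ℝ} (h : IsPerfect μ) (h0 : ∀ m w, 0 ≤ μ m w) :
    IsFrac μ :=
  ⟨h0, fun m => (h.1 m).le, fun w => (h.2 w).le⟩

lemma IsPerfect.comp_equiv {μ : Fin n → Fin n → ℝ} (h : IsPerfect μ) (e : Equiv.Perm (Fin n)) :
    IsPerfect (μ ∘ e) :=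
  ⟨fun m => h.1 (e m), fun w => (Equiv.sum_comp e (μ · w)).trans (h.2 w)⟩

lemma IsStable.of_diag {U V μ : Fin n → Fin n → ℝ} (hU : ∀ m w, 0 ≤ U m w)
    (hV : ∀ m w, 0 ≤ V m w) (hμ : ∀ m w, 0 ≤ μ m w)
    (hoff : ∀ m w, m ≠ w → U m w = 0 ∨ V m w = 0)
    (hdiag : ∀ i, U i i ≤ uM U μ i ∨ V i i ≤ vW V μ i) : IsStable U V μ := by
  intro m w
  by_cases h : m = w
  · exact h ▸ hdiag m
  · rcases hoff m w h with h0 | h0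
    · exact .inl (h0 ▸ sum_nonneg fun w _ => mul_nonneg (hU m w) (hμ m w))
    · exact .inr (h0 ▸ sum_nonneg fun m _ => mul_nonneg (hV m w) (hμ m w))

lemma U18_nonneg (hα : 0 ≤ α) (m w : Fin n) : 0 ≤ U18 n α m w := by
  unfold U18; split_ifs <;> first | exact hα | norm_num

lemma V18_nonneg (hα : 0 ≤ α) (m w : Fin n) : 0 ≤ V18 n α m w := by
  unfold V18; split_ifs <;> first | exact hα | norm_num

lemma U18_eq_zero_or_V18_eq_zero (hn : Odd n) {m w : Fin n} (h : m ≠ w) :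
    U18 n α m w = 0 ∨ V18 n α m w = 0 := by
  obtain ⟨k, rfl⟩ := hn
  simp only [U18, V18, if_neg h]
  grind

lemma muOpt19_comm (i j : Fin n) : muOpt19 n i j = muOpt19 n j i := by
  unfold muOpt19; split_ifs <;> first | rfl | omega

lemma muOpt19_nonneg (i j : Fin n) : 0 ≤ muOpt19 n i j := by
  unfold muOpt19; split_ifs <;> norm_num

lemma isPerfect_muOpt19 (hn : Odd n) : IsPerfect (muOpt19 n) := by
  have row (i : Fin n) : ∑ j, muOpt19 n i j = 1 := by
    obtain ⟨k, rfl⟩ := hn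
    let p : Fin (2 * k + 1) :=
      ⟨if i.val = 0 then 0 else if i.val % 2 = 1 then i.val + 1 else i.val - 1,
        by split_ifs <;> omega⟩
    have hp (j : Fin (2 * k + 1)) : muOpt19 _ i j = if j = p then 1 else 0 := by
      simp only [muOpt19, p, Fin.ext_iff]; split_ifs <;> first | rfl | omega
    simp [hp]
  exact ⟨row, fun w => (sum_congr rfl fun m _ => muOpt19_comm m w).trans (row w)⟩

lemma nu19_eq_comp_swap {t : ℕ} (ht : 1 ≤ t) (htn : 2 * t < n) :
    nu19 n t = muOpt19 n ∘ Equiv.swap ⟨0, by omega⟩ ⟨2 * t - 1, by omega⟩ := by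
  ext i j
  simp only [Function.comp, Equiv.swap_apply_def, nu19, muOpt19, Fin.ext_iff]
  grind

lemma nuLast19_eq_comp_swap (hn : Odd n) :
    nuLast19 n = muOpt19 n ∘ Equiv.swap ⟨0, hn.pos⟩ ⟨n - 1, by have := hn.pos; omega⟩ := by
  obtain ⟨k, rfl⟩ := hn
  ext i j
  simp only [Function.comp, Equiv.swap_apply_def, nuLast19, muOpt19, Fin.ext_iff]
  grind

lemma isPerfect_mu19 (hn : Odd n) (hα : α ≠ 0) : IsPerfect (mu19 n α) := by
  have hν : ∀ t ∈ Icc 1 ((n - 1) / 2), IsPerfect (nu19 n t) := fun t ht => by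
    rw [mem_Icc] at ht
    rw [nu19_eq_comp_swap ht.1 (by obtain ⟨k, rfl⟩ := hn; omega)]
    exact (isPerfect_muOpt19 hn).comp_equiv _
  have hL : IsPerfect (nuLast19 n) := by
    rw [nuLast19_eq_comp_swap hn]
    exact (isPerfect_muOpt19 hn).comp_equiv _
  have hO := isPerfect_muOpt19 hn
  have hweights : 1 / α * ((n - 1) / 2 : ℕ) + 1 / α + (1 - ((n : ℝ) + 1) / (2 * α)) = 1 := by
    obtain ⟨k, rfl⟩ := hn
    rw [show (2 * k + 1 - 1) / 2 = k by omega]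
    push_cast; field_simp; ring
  constructor
  · intro i
    simp only [mu19, sum_add_distrib, ← mul_sum]
    rw [sum_comm, sum_congr rfl fun t ht => (hν t ht).1 i, hL.1 i, hO.1 i]
    simpa using hweights
  · intro j
    simp only [mu19, sum_add_distrib, ← mul_sum]
    rw [sum_comm, sum_congr rfl fun t ht => (hν t ht).2 j, hL.2 j, hO.2 j]
    simpa using hweights

lemma mu19_nonneg (hα : (n : ℝ) + 1 ≤ 2 * α) (i j : Fin n) : 0 ≤ mu19 n α i j := by
  have hα0 : 0 < α := by linarith [n.cast_nonneg (α := ℝ)]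
  have hc : 0 ≤ 1 - ((n : ℝ) + 1) / (2 * α) := by
    rw [sub_nonneg, div_le_one (by positivity)]; exact hα
  refine add_nonneg (add_nonneg (sum_nonneg fun t _ => mul_nonneg (by positivity) ?_)
    (mul_nonneg (by positivity) ?_)) (mul_nonneg hc (muOpt19_nonneg i j))
  · unfold nu19 muOpt19; split_ifs <;> norm_num
  · unfold nuLast19 muOpt19; split_ifs <;> norm_num

lemma mu19_apply (hn : n = 2 * k + 1) (i j : Fin n) :
    mu19 n α i j = 1 / α * ∑ t ∈ Icc 1 k, nu19 n t i j + 1 / α * nuLast19 n i j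
      + (1 - ((n : ℝ) + 1) / (2 * α)) * muOpt19 n i j := by
  rw [mu19, mul_sum, show (n - 1) / 2 = k by omega]

/-- Row `i` of `μ^(t)` differs from that of `μ^opt` only for `i = 2t - 1`. -/
lemma sum_nu19_of_ne_zero (hn : n = 2 * k + 1) {i : Fin n} (hi : i.val ≠ 0) (j : Fin n) :
    ∑ t ∈ Icc 1 k, nu19 n t i j = k * muOpt19 n i j +
      if i.val % 2 = 1 then (if j.val = 0 then 1 else 0) - muOpt19 n i j else 0 := by
  by_cases hodd : i.val % 2 = 1
  · rw [if_pos hodd]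
    have hν (t : ℕ) (ht : t ∈ Icc 1 k) : nu19 n t i j = muOpt19 n i j +
        if (i.val + 1) / 2 = t then (if j.val = 0 then 1 else 0) - muOpt19 n i j else 0 := by
      rw [mem_Icc] at ht
      simp only [nu19, if_neg hi]
      split_ifs <;> first | omega | ring
    rw [sum_congr rfl hν, sum_add_distrib, sum_const, sum_ite_eq,
      if_pos (mem_Icc.2 (by omega)), Nat.card_Icc, nsmul_eq_mul]
    simp
  · rw [if_neg hodd]
    have hν (t : ℕ) (ht : t ∈ Icc 1 k) : nu19 n t i j = muOpt19 n i j := by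
      rw [mem_Icc] at ht
      simp only [nu19, if_neg hi, if_neg (show i.val ≠ 2 * t - 1 by omega)]
    rw [sum_congr rfl hν, sum_const, Nat.card_Icc, nsmul_eq_mul]
    simp

lemma mu19_self (hn : n = 2 * k + 1) (hk : 1 ≤ k) (i : Fin n) :
    mu19 n α i i = if i.val = 0 then 1 - ((n : ℝ) + 1) / (2 * α) else 0 := by
  rw [mu19_apply hn]
  by_cases hi : i.val = 0
  · have hν (t : ℕ) (ht : t ∈ Icc 1 k) : nu19 n t i i = 0 := by
      rw [mem_Icc] at ht
      rw [nu19, if_pos hi, if_neg (by omega)]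
    simp (disch := omega) [sum_eq_zero hν, nuLast19, muOpt19, hi, show 0 ≠ n - 2 by omega]
  · simp (disch := omega) [sum_nu19_of_ne_zero hn hi, nuLast19, muOpt19, hi]

lemma mu19_of_odd_of_eq_zero (hn : n = 2 * k + 1) {i j : Fin n} (hi : i.val % 2 = 1)
    (hj : j.val = 0) : mu19 n α i j = 1 / α := by
  simp (disch := omega) only [mu19_apply hn, sum_nu19_of_ne_zero hn, nuLast19, muOpt19, if_pos,
    if_neg]
  ring

lemma mu19_of_odd_of_eq_succ (hn : n = 2 * k + 1) (hα : α ≠ 0) {i j : Fin n}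
    (hi : i.val % 2 = 1) (hj : j.val = i.val + 1) : mu19 n α i j = 1 - 1 / α := by
  simp (disch := omega) only [mu19_apply hn, sum_nu19_of_ne_zero hn, nuLast19, muOpt19, if_pos,
    if_neg]
  rw [hn]; push_cast; field_simp; ring

lemma mu19_of_even_of_succ_eq (hn : n = 2 * k + 1) (hα : α ≠ 0) {i j : Fin n}
    (hi0 : i.val ≠ 0) (hi : i.val % 2 = 0) (hj : j.val + 1 = i.val) :
    mu19 n α i j = 1 - if i.val = n - 1 then 1 / α else 0 := by
  simp (disch := omega) only [mu19_apply hn, sum_nu19_of_ne_zero hn, nuLast19, muOpt19, if_pos,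
    if_neg]
  split_ifs <;> first | omega | (rw [hn]; push_cast; field_simp; ring)

lemma mu19_of_eq_last_of_eq_zero (hn : n = 2 * k + 1) (hk : 1 ≤ k) {i j : Fin n}
    (hi : i.val = n - 1) (hj : j.val = 0) : mu19 n α i j = 1 / α := by
  simp (disch := omega) only [mu19_apply hn, sum_nu19_of_ne_zero hn, nuLast19, muOpt19, if_pos,
    if_neg]
  ring

lemma U18_mul_mu19_eq_zero (hn : n = 2 * k + 1) (hk : 1 ≤ k) {m w : Fin n}
    (hmw : w ≠ m ∨ m.val ≠ 0) (h₁ : ¬(m.val % 2 = 1 ∧ w.val = 0))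
    (h₂ : ¬(m.val % 2 = 0 ∧ w.val + 1 = m.val)) : U18 n α m w * mu19 n α m w = 0 := by
  by_cases hwm : w = m
  · rw [hwm, mu19_self hn hk, if_neg (by omega), mul_zero]
  · rw [U18, if_neg (Ne.symm hwm), if_neg h₁, if_neg h₂, zero_mul]

lemma V18_mul_mu19_eq_zero (hn : n = 2 * k + 1) (hk : 1 ≤ k) {m w : Fin n}
    (hmw : m ≠ w ∨ w.val ≠ 0) (h₁ : ¬(m.val % 2 = 1 ∧ w.val = m.val + 1))
    (h₂ : ¬(m.val = n - 1 ∧ w.val = 0)) : V18 n α m w * mu19 n α m w = 0 := by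
  by_cases hmw' : m = w
  · rw [hmw', mu19_self hn hk, if_neg (by omega), mul_zero]
  · rw [V18, if_neg hmw', if_neg h₁, if_neg h₂, zero_mul]

lemma uM_mu19 (hn : n = 2 * k + 1) (hk : 1 ≤ k) (hα : α ≠ 0) (m : Fin n) :
    uM (U18 n α) (mu19 n α) m =
      (if m.val = 0 then 1 - ((n : ℝ) + 1) / (2 * α) else if m.val % 2 = 1 then 1 else α)
        - if m.val = n - 1 then 1 else 0 := by
  by_cases hm : m.val = 0
  · rw [uM, Fintype.sum_eq_single m fun w hw => U18_mul_mu19_eq_zero hn hk (.inl hw)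
      (by omega) (by omega)]
    rw [U18, if_pos rfl, one_mul, mu19_self hn hk, if_pos hm, if_pos hm,
      if_neg (show m.val ≠ n - 1 by omega), sub_zero]
  by_cases hodd : m.val % 2 = 1
  · obtain ⟨p, hp⟩ : ∃ p : Fin n, p.val = 0 := ⟨⟨0, by omega⟩, rfl⟩
    rw [uM, Fintype.sum_eq_single p fun w hw => U18_mul_mu19_eq_zero hn hk (.inr hm)
      (by omega) (by omega)]
    rw [U18, if_neg (by omega), if_pos ⟨hodd, hp⟩, mu19_of_odd_of_eq_zero hn hodd hp,
      if_neg hm, if_pos hodd, if_neg (by omega), sub_zero]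
    field_simp
  · obtain ⟨p, hp⟩ : ∃ p : Fin n, p.val + 1 = m.val := ⟨⟨m.val - 1, by omega⟩, by simp; omega⟩
    rw [uM, Fintype.sum_eq_single p fun w hw => U18_mul_mu19_eq_zero hn hk (.inr hm)
      (by omega) (by omega)]
    rw [U18, if_neg (by omega), if_neg (by omega), if_pos ⟨by omega, hp⟩,
      mu19_of_even_of_succ_eq hn hα hm (by omega) hp, if_neg hm, if_neg hodd]
    split_ifs <;> simp [mul_sub, hα]

lemma vW_mu19 (hn : n = 2 * k + 1) (hk : 1 ≤ k) (hα : α ≠ 0) (w : Fin n) :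
    vW (V18 n α) (mu19 n α) w =
      if w.val = 0 then 2 - ((n : ℝ) + 1) / (2 * α) else if w.val % 2 = 1 then 0 else α - 1 := by
  by_cases hw : w.val = 0
  · obtain ⟨p, hp⟩ : ∃ p : Fin n, p.val = n - 1 := ⟨⟨n - 1, by omega⟩, rfl⟩
    rw [vW, Fintype.sum_eq_add w p (by omega) fun m hm => V18_mul_mu19_eq_zero hn hk
      (.inl hm.1) (by omega) (by omega)]
    rw [V18, if_pos rfl, one_mul, mu19_self hn hk, if_pos hw, V18, if_neg (by omega),
      if_neg (by omega), if_pos ⟨hp, hw⟩, mu19_of_eq_last_of_eq_zero hn hk hp hw, if_pos hw]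
    field_simp; ring
  by_cases hodd : w.val % 2 = 1
  · rw [vW, sum_eq_zero fun m _ => V18_mul_mu19_eq_zero hn hk (.inr hw) (by omega) (by omega),
      if_neg hw, if_pos hodd]
  · obtain ⟨p, hp⟩ : ∃ p : Fin n, w.val = p.val + 1 := ⟨⟨w.val - 1, by omega⟩, by simp; omega⟩
    rw [vW, Fintype.sum_eq_single p fun m hm => V18_mul_mu19_eq_zero hn hk (.inr hw)
      (by omega) (by omega)]
    rw [V18, if_neg (by omega), if_pos ⟨by omega, hp⟩,
      mu19_of_odd_of_eq_succ hn hα (by omega) hp, if_neg hw, if_neg hodd]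
    field_simp

lemma sum_range_ite_parity (a b e : ℝ) :
    ∑ i ∈ range (2 * k + 1), (if i = 0 then a else if i % 2 = 1 then b else e)
      = a + k * (b + e) := by
  induction k with
  | zero => simp
  | succ k ih =>
    rw [show 2 * (k + 1) + 1 = 2 * k + 1 + 1 + 1 by ring, sum_range_succ, sum_range_succ, ih,
      if_neg (by omega), if_pos (by omega), if_neg (by omega), if_neg (by omega)]
    push_cast; ring

lemma sum_fin_ite_parity (a b e : ℝ) :
    ∑ i : Fin (2 * k + 1), (if i.val = 0 then a else if i.val % 2 = 1 then b else e)
      = a + k * (b + e) :=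
  (Fin.sum_univ_eq_sum_range (fun i => if i = 0 then a else if i % 2 = 1 then b else e) _).trans
    (sum_range_ite_parity a b e)

lemma welfare_mu19 (hn : n = 2 * k + 1) (hk : 1 ≤ k) (hα : α ≠ 0) :
    welfare (U18 n α) (V18 n α) (mu19 n α) = 2 * k * α + 2 * (1 - ((n : ℝ) + 1) / (2 * α)) := by
  have hlast : ∑ i : Fin n, (if i.val = n - 1 then (1 : ℝ) else 0) = 1 :=
    (Fin.sum_univ_eq_sum_range (fun i => if i = n - 1 then (1 : ℝ) else 0) n).trans
      (by rw [sum_ite_eq', if_pos (mem_range.2 (by omega))])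
  simp only [welfare, uM_mu19 hn hk hα, vW_mu19 hn hk hα, sum_sub_distrib, hlast]
  subst hn
  rw [sum_fin_ite_parity, sum_fin_ite_parity]
  ring

lemma isStable_mu19 (hn : n = 2 * k + 1) (hk : 1 ≤ k) (hα : (n : ℝ) + 2 < α) :
    IsStable (U18 n α) (V18 n α) (mu19 n α) := by
  have hα0 : 0 < α := by linarith [n.cast_nonneg (α := ℝ)]
  refine .of_diag (U18_nonneg hα0.le) (V18_nonneg hα0.le) (mu19_nonneg (by linarith))
    (fun m w h => U18_eq_zero_or_V18_eq_zero ⟨k, hn⟩ h) fun i => ?_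
  by_cases hi : i.val = 0
  · right
    rw [V18, if_pos rfl, vW_mu19 hn hk hα0.ne', if_pos hi]
    have : ((n : ℝ) + 1) / (2 * α) ≤ 1 := by rw [div_le_one (by positivity)]; linarith
    linarith
  · left
    rw [U18, if_pos rfl, uM_mu19 hn hk hα0.ne', if_neg hi]
    split_ifs <;> first | omega | linarith [n.cast_nonneg (α := ℝ)]

lemma mu19_one (hα : α ≠ 0) (i j : Fin 1) : mu19 1 α i j = 1 := by
  simp [mu19, nuLast19, muOpt19, Fin.val_eq_zero]
  field_simp; ring

end

theorem stmt19_general (n : ℕ) (hodd : Odd n) (α : ℝ)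
    (hα : (n : ℝ) + 2 < α) :
    IsFrac (mu19 n α) ∧ IsStable (U18 n α) (V18 n α) (mu19 n α) ∧
    ((n : ℝ) - 1) * α < welfare (U18 n α) (V18 n α) (mu19 n α) := by
  have hα0 : 0 < α := by linarith [n.cast_nonneg (α := ℝ)]
  refine ⟨(isPerfect_mu19 hodd hα0.ne').isFrac (mu19_nonneg (by linarith)), ?_⟩
  obtain ⟨k, hn⟩ := hodd
  rcases Nat.eq_zero_or_pos k with rfl | hk
  · subst hn
    simp [IsStable, welfare, uM, vW, U18, V18, mu19_one hα0.ne']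
  · refine ⟨isStable_mu19 hn hk hα, ?_⟩
    have hc : ((n : ℝ) + 1) / (2 * α) < 1 := by rw [div_lt_one (by positivity)]; linarith
    have hnk : (n : ℝ) - 1 = 2 * k := by rw [hn]; push_cast; ring
    rw [welfare_mu19 hn hk hα0.ne', hnk]
    linarith

theorem stmt19 (n : ℕ) (hodd : Odd n) (hpos : 0 < n) (α : ℝ)
    (hα : (n : ℝ) + 2 < α) :
    IsFrac (mu19 n α) ∧ IsStable (U18 n α) (V18 n α) (mu19 n α) ∧
    ((n : ℝ) - 1) * α < welfare (U18 n α) (V18 n α) (mu19 n α) :=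
  stmt19_general n hodd α hα
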